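/- arXiv:1611.05608 — 2 statements merged into one kernel-verified Lean document; each statement's English description precedes it below -/
import Mathlib

section
/- Let f₁,…,fₙ : ℝ → ℝ be smooth, A = (a_{ij}) an invertible n×n real matrix, and z(x) = Σᵢ fᵢ((Ax)ᵢ). If the Gauss–Kronecker curvature of the graph of z is a constant K₀, then at least one of the functions fᵢ is affine linear, i.e. fᵢ'' ≡ 0 for some i. -/
lemma quad_zero (a b c x₁ x₂ x₃ : ℝ) (h12 : x₁ ≠ x₂) (h13 : x₁ ≠ x₃) (h23 : x₂ ≠ x₃)
    (e1 : a*x₁^2+b*x₁+c = 0) (e2 : a*x₂^2+b*x₂+c = 0) (e3 : a*x₃^2+b*x₃+c = 0) :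
    ∀ x : ℝ, a*x^2+b*x+c = 0 := by
  have hD : (x₁-x₂)*(x₁-x₃)*(x₂-x₃) ≠ 0 :=
    mul_ne_zero (mul_ne_zero (sub_ne_zero.2 h12) (sub_ne_zero.2 h13)) (sub_ne_zero.2 h23)
  have ha : a = 0 := by
    have h : a * ((x₁-x₂)*(x₁-x₃)*(x₂-x₃)) = 0 := by
      linear_combination (x₂-x₃)*e1 - (x₁-x₃)*e2 + (x₁-x₂)*e3
    exact (mul_eq_zero.1 h).resolve_right hD
  have hb : b = 0 := by
    have h : b * (x₁-x₂) = 0 := by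
      linear_combination e1 - e2 + (x₂^2 - x₁^2)*ha
    exact (mul_eq_zero.1 h).resolve_right (sub_ne_zero.2 h12)
  have hc : c = 0 := by linear_combination e1 - x₁^2*ha - x₁*hb
  intro x; rw [ha, hb, hc]; ring

lemma quad_ext {S : Set ℝ} (hS : S.Infinite) {a b c : ℝ}
    (h : ∀ x ∈ S, a*x^2+b*x+c = 0) : ∀ x : ℝ, a*x^2+b*x+c = 0 := by
  obtain ⟨x₁, hx₁⟩ := hS.nonempty
  obtain ⟨x₂, hx₂⟩ := (hS.diff (Set.finite_singleton x₁)).nonempty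
  obtain ⟨x₃, hx₃⟩ := (hS.diff (Set.toFinite {x₁, x₂})).nonempty
  obtain ⟨hx₂S, hx₂n⟩ := hx₂
  obtain ⟨hx₃S, hx₃n⟩ := hx₃
  simp only [Set.mem_singleton_iff] at hx₂n
  simp only [Set.mem_insert_iff, Set.mem_singleton_iff, not_or] at hx₃n
  exact quad_zero a b c x₁ x₂ x₃ (fun h => hx₂n h.symm) (fun h => hx₃n.1 h.symm)
    (fun h => hx₃n.2 h.symm) (h _ hx₁) (h _ hx₂S) (h _ hx₃S)

lemma rpow_base_inj {x y e : ℝ} (hx : 0 < x) (hy : 0 < y) (he : 0 < e) (h : x ^ e = y ^ e) : x = y := by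
  rcases lt_trichotomy x y with hl | hl | hl
  · exact absurd h (ne_of_lt (Real.rpow_lt_rpow hx.le hl he))
  · exact hl
  · exact absurd h.symm (ne_of_lt (Real.rpow_lt_rpow hy.le hl he))

open Matrix

noncomputable def hessian {n : ℕ} (f : (Fin n → ℝ) → ℝ) (x : Fin n → ℝ) :
    Matrix (Fin n) (Fin n) ℝ :=
  fun i j => fderiv ℝ (fun y => fderiv ℝ f y (Pi.single j 1)) x (Pi.single i 1)

section calc1
variable {n : ℕ} (f : Fin n → ℝ → ℝ) (A : Matrix (Fin n) (Fin n) ℝ)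

noncomputable def LM (k : Fin n) : (Fin n → ℝ) →L[ℝ] ℝ :=
  ∑ j, A k j • (ContinuousLinearMap.proj j)

lemma LM_apply (k : Fin n) (x : Fin n → ℝ) : LM A k x = A.mulVec x k := by
  simp [LM, Matrix.mulVec, dotProduct, ContinuousLinearMap.sum_apply]

lemma LM_single (k j : Fin n) : LM A k (Pi.single j 1) = A k j := by
  simp [LM, ContinuousLinearMap.sum_apply, Pi.single_apply]

variable (hf : ∀ i, ContDiff ℝ (⊤ : ℕ∞) (f i))
include hf

lemma hd1 (k : Fin n) : Differentiable ℝ (f k) := (hf k).differentiable (by simp)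

lemma hd2 (k : Fin n) : Differentiable ℝ (deriv (f k)) :=
  ((contDiff_infty_iff_deriv.mp ((hf k).of_le (by simp))).2).differentiable (by simp)

lemma fderiv1 (x : Fin n → ℝ) :
    HasFDerivAt (fun x => ∑ k, f k (A.mulVec x k))
      (∑ k, deriv (f k) (A.mulVec x k) • LM A k) x := by
  apply HasFDerivAt.fun_sum
  intro k _
  have h2 : HasDerivAt (f k) (deriv (f k) (LM A k x)) (LM A k x) :=
    ((hd1 f hf k) (LM A k x)).hasDerivAt
  have h3 := h2.comp_hasFDerivAt x (LM A k).hasFDerivAt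
  have heq : (fun x => f k (A.mulVec x k)) = f k ∘ (fun x => LM A k x) := by
    funext y; simp [Function.comp, LM_apply]
  rw [heq, ← LM_apply]
  exact h3

lemma grad_eq (x : Fin n → ℝ) (v : Fin n → ℝ) :
    fderiv ℝ (fun x => ∑ k, f k (A.mulVec x k)) x v
      = ∑ k, deriv (f k) (A.mulVec x k) * LM A k v := by
  rw [(fderiv1 f A hf x).fderiv]
  simp [ContinuousLinearMap.sum_apply]

lemma fderiv2 (j : Fin n) (x : Fin n → ℝ) :
    HasFDerivAt (fun y => ∑ k, deriv (f k) (A.mulVec y k) * A k j)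
      (∑ k, (A k j * deriv (deriv (f k)) (A.mulVec x k)) • LM A k) x := by
  apply HasFDerivAt.fun_sum
  intro k _
  have h2 : HasDerivAt (deriv (f k)) (deriv (deriv (f k)) (LM A k x)) (LM A k x) :=
    ((hd2 f hf k) (LM A k x)).hasDerivAt
  have h3 := (h2.comp_hasFDerivAt x (LM A k).hasFDerivAt).const_mul (A k j)
  have heq : (fun y => deriv (f k) (A.mulVec y k) * A k j)
      = fun y => A k j * (deriv (f k) ∘ fun y => LM A k y) y := by
    funext y; simp [Function.comp, LM_apply]; ring
  rw [heq, ← LM_apply]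
  rw [smul_smul] at h3
  exact h3

lemma hess_eq (x : Fin n → ℝ) (i j : Fin n) :
    hessian (fun x => ∑ k, f k (A.mulVec x k)) x i j
      = ∑ k, A k i * A k j * deriv (deriv (f k)) (A.mulVec x k) := by
  unfold hessian
  have hfun : (fun y => fderiv ℝ (fun x => ∑ k, f k (A.mulVec x k)) y (Pi.single j 1))
      = fun y => ∑ k, deriv (f k) (A.mulVec y k) * A k j := by
    funext y
    rw [grad_eq f A hf]
    exact Finset.sum_congr rfl fun k _ => by rw [LM_single]
  rw [hfun, (fderiv2 f A hf j x).fderiv]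
  simp only [ContinuousLinearMap.sum_apply, ContinuousLinearMap.smul_apply, smul_eq_mul]
  exact Finset.sum_congr rfl fun k _ => by rw [LM_single]; ring

lemma hess_det (x : Fin n → ℝ) :
    (hessian (fun x => ∑ k, f k (A.mulVec x k)) x).det
      = (A.det)^2 * ∏ k, deriv (deriv (f k)) (A.mulVec x k) := by
  have hmat : hessian (fun x => ∑ k, f k (A.mulVec x k)) x
      = Aᵀ * Matrix.diagonal (fun k => deriv (deriv (f k)) (A.mulVec x k)) * A := by
    ext i j
    rw [hess_eq f A hf]
    simp only [Matrix.mul_apply, Matrix.diagonal, Matrix.transpose_apply, Matrix.of_apply,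
      Matrix.mul_assoc]
    simp only [mul_ite, mul_zero, Finset.sum_ite_eq', Finset.mem_univ, if_true]
    refine Finset.sum_congr rfl fun k _ => ?_
    ring
  rw [hmat, Matrix.det_mul, Matrix.det_mul, Matrix.det_transpose, Matrix.det_diagonal]
  ring
end calc1
theorem stmt_5 {n : ℕ} (hn : 2 ≤ n)
    (f : Fin n → ℝ → ℝ) (hf : ∀ i, ContDiff ℝ (⊤ : ℕ∞) (f i))
    (A : Matrix (Fin n) (Fin n) ℝ) (hA : IsUnit A.det)
    (z : (Fin n → ℝ) → ℝ) (hz : ∀ x, z x = ∑ i, f i (A.mulVec x i))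
    (K₀ : ℝ)
    (hK : ∀ x : Fin n → ℝ,
      (hessian z x).det /
        (1 + ∑ i, (fderiv ℝ z x (Pi.single i 1)) ^ 2) ^ (((n : ℝ) + 2) / 2)
        = K₀) :
    ∃ i : Fin n, ∀ t : ℝ, deriv (deriv (f i)) t = 0 := by
  classical
  by_contra hcon
  push_neg at hcon
  choose t ht using hcon
  have hzf : z = fun x => ∑ k, f k (A.mulVec x k) := funext hz
  subst hzf
  have he : (0:ℝ) < ((n:ℝ)+2)/2 := by positivity
  have hQpos : ∀ u : Fin n → ℝ,
      (0:ℝ) < 1 + ∑ j, (∑ k, deriv (f k) (u k) * A k j)^2 := by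
    intro u; positivity
  -- the central identity
  have key : ∀ u : Fin n → ℝ,
      (A.det)^2 * ∏ k, deriv (deriv (f k)) (u k)
        = K₀ * (1 + ∑ j, (∑ k, deriv (f k) (u k) * A k j)^2) ^ (((n:ℝ)+2)/2) := by
    intro u
    have hAu : A.mulVec (A⁻¹.mulVec u) = u := by
      rw [Matrix.mulVec_mulVec, Matrix.mul_nonsing_inv _ hA, Matrix.one_mulVec]
    have hx := hK (A⁻¹.mulVec u)
    rw [hess_det f A hf, hAu] at hx
    have hg2 : ∀ i : Fin n,
        fderiv ℝ (fun x => ∑ k, f k (A.mulVec x k)) (A⁻¹.mulVec u) (Pi.single i 1)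
          = ∑ k, deriv (f k) (u k) * A k i := by
      intro i
      rw [grad_eq f A hf, hAu]
      exact Finset.sum_congr rfl fun k _ => by rw [LM_single]
    simp only [hg2] at hx
    rw [div_eq_iff (ne_of_gt (Real.rpow_pos_of_pos (hQpos u) _))] at hx
    exact hx
  have hdet2 : (A.det)^2 ≠ 0 := pow_ne_zero _ hA.ne_zero
  have hK0 : K₀ ≠ 0 := by
    intro h0
    have hk := key t
    rw [h0, zero_mul] at hk
    exact mul_ne_zero hdet2 (Finset.prod_ne_zero_iff.2 fun k _ => ht k) hk
  -- the second derivatives never vanish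
  have hgne : ∀ k (s : ℝ), deriv (deriv (f k)) s ≠ 0 := by
    intro k s
    have hk := key (Function.update t k s)
    have hrhs : (A.det)^2 * ∏ k', deriv (deriv (f k')) (Function.update t k s k') ≠ 0 := by
      rw [hk]
      exact mul_ne_zero hK0 (ne_of_gt (Real.rpow_pos_of_pos (hQpos _) _))
    have hprod : ∏ k', deriv (deriv (f k')) (Function.update t k s k') ≠ 0 := by
      intro h; exact hrhs (by rw [h, mul_zero])
    have := Finset.prod_ne_zero_iff.1 hprod k (Finset.mem_univ k)
    simpa using this
  -- first derivatives are injective (Rolle)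
  have hinj : ∀ k, Function.Injective (deriv (f k)) := by
    intro k a b hab
    by_contra hne
    rcases lt_or_gt_of_ne hne with h | h
    · obtain ⟨c, _, hc⟩ := exists_deriv_eq_zero h ((hd2 f hf k).continuous.continuousOn) hab
      exact hgne k c hc
    · obtain ⟨c, _, hc⟩ :=
        exists_deriv_eq_zero h ((hd2 f hf k).continuous.continuousOn) hab.symm
      exact hgne k c hc
  have hinf : ∀ k, (Set.range (deriv (f k))).Infinite :=
    fun k => Set.infinite_range_of_injective (hinj k)
  -- two distinct indices
  obtain ⟨i1, i2, h12⟩ : ∃ i1 i2 : Fin n, i1 ≠ i2 :=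
    ⟨⟨0, by omega⟩, ⟨1, by omega⟩, by simp [Fin.ext_iff]⟩
  set E2 : Finset (Fin n) := (Finset.univ.erase i1).erase i2 with hE2
  set cc : Fin n → ℝ := fun j => ∑ k ∈ E2, deriv (f k) (t k) * A k j with hcc
  set P := ∑ j, (A i1 j)^2 with hP
  set R2 := ∑ j, (A i2 j)^2 with hR2
  set M := ∑ j, A i1 j * A i2 j with hM
  set B1 := ∑ j, A i1 j * cc j with hB1
  set B2 := ∑ j, A i2 j * cc j with hB2
  set CC := ∑ j, (cc j)^2 with hCC
  set RR := ∏ k ∈ E2, deriv (deriv (f k)) (t k) with hRR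
  set F : ℝ → ℝ → ℝ := fun s t2 =>
    1 + (P*s^2 + R2*t2^2 + 2*M*s*t2 + 2*B1*s + 2*B2*t2 + CC) with hF
  have hmem2 : i2 ∈ Finset.univ.erase i1 :=
    Finset.mem_erase.2 ⟨h12.symm, Finset.mem_univ _⟩
  have hsum_split : ∀ h : Fin n → ℝ, ∑ k, h k = h i1 + (h i2 + ∑ k ∈ E2, h k) := by
    intro h
    rw [← Finset.add_sum_erase _ _ (Finset.mem_univ i1), ← Finset.add_sum_erase _ _ hmem2]
  have hprod_split : ∀ h : Fin n → ℝ, ∏ k, h k = h i1 * (h i2 * ∏ k ∈ E2, h k) := by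
    intro h
    rw [← Finset.mul_prod_erase _ _ (Finset.mem_univ i1), ← Finset.mul_prod_erase _ _ hmem2]
  set U : ℝ → ℝ → (Fin n → ℝ) :=
    fun a b => Function.update (Function.update t i1 a) i2 b with hU
  have hUi1 : ∀ a b, U a b i1 = a := by
    intro a b
    simp [hU, Function.update_of_ne h12, Function.update_self]
  have hUi2 : ∀ a b, U a b i2 = b := by
    intro a b; simp [hU, Function.update_self]
  have hUE : ∀ a b k, k ∈ E2 → U a b k = t k := by
    intro a b k hk
    rw [hE2] at hk
    obtain ⟨hk2, hk1'⟩ := Finset.mem_erase.1 hk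
    obtain ⟨hk1, -⟩ := Finset.mem_erase.1 hk1'
    simp [hU, Function.update_of_ne hk1, Function.update_of_ne hk2]
  -- value of 1 + |grad|² along U
  have hFval : ∀ a b : ℝ,
      1 + ∑ j, (∑ k, deriv (f k) (U a b k) * A k j)^2
        = F (deriv (f i1) a) (deriv (f i2) b) := by
    intro a b
    have hin : ∀ j, ∑ k, deriv (f k) (U a b k) * A k j
        = deriv (f i1) a * A i1 j + deriv (f i2) b * A i2 j + cc j := by
      intro j
      rw [hsum_split (fun k => deriv (f k) (U a b k) * A k j), hUi1, hUi2]
      have hcj : ∑ k ∈ E2, deriv (f k) (U a b k) * A k j = cc j := by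
        rw [hcc]
        exact Finset.sum_congr rfl fun k hk => by rw [hUE a b k hk]
      rw [hcj]; ring
    have hsq : ∀ j, (∑ k, deriv (f k) (U a b k) * A k j)^2
        = (deriv (f i1) a)^2*(A i1 j)^2 + ((deriv (f i2) b)^2*(A i2 j)^2
          + (2*(deriv (f i1) a)*(deriv (f i2) b)*(A i1 j * A i2 j)
          + (2*(deriv (f i1) a)*(A i1 j * cc j)
          + (2*(deriv (f i2) b)*(A i2 j * cc j) + (cc j)^2)))) := by
      intro j; rw [hin j]; ring
    rw [Finset.sum_congr rfl fun j _ => hsq j]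
    simp only [Finset.sum_add_distrib, ← Finset.mul_sum]
    rw [← hP, ← hR2, ← hM, ← hB1, ← hB2, ← hCC, hF]
    ring
  have hFpos : ∀ a b : ℝ, 0 < F (deriv (f i1) a) (deriv (f i2) b) := by
    intro a b
    rw [← hFval a b]
    positivity
  have hRRne : RR ≠ 0 := Finset.prod_ne_zero_iff.2 fun k _ => hgne k (t k)
  -- key specialised to the two active coordinates
  have keyF : ∀ a b : ℝ,
      (A.det)^2 * (deriv (deriv (f i1)) a * (deriv (deriv (f i2)) b * RR))
        = K₀ * (F (deriv (f i1) a) (deriv (f i2) b)) ^ (((n:ℝ)+2)/2) := by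
    intro a b
    have hk := key (U a b)
    rw [hprod_split (fun k => deriv (deriv (f k)) (U a b k)), hUi1, hUi2] at hk
    have hpr : ∏ k ∈ E2, deriv (deriv (f k)) (U a b k) = RR := by
      rw [hRR]
      exact Finset.prod_congr rfl fun k hk' => by rw [hUE a b k hk']
    rw [hpr] at hk
    rw [← hFval a b]
    exact hk
  -- rectangle identity on the ranges
  have hrect : ∀ a a' b b' : ℝ,
      F (deriv (f i1) a) (deriv (f i2) b) * F (deriv (f i1) a') (deriv (f i2) b')
        = F (deriv (f i1) a) (deriv (f i2) b') * F (deriv (f i1) a') (deriv (f i2) b) := by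
    intro a a' b b'
    apply rpow_base_inj (mul_pos (hFpos a b) (hFpos a' b'))
      (mul_pos (hFpos a b') (hFpos a' b)) he
    rw [Real.mul_rpow (hFpos a b).le (hFpos a' b').le,
        Real.mul_rpow (hFpos a b').le (hFpos a' b).le]
    have h2 : K₀^2 * ((F (deriv (f i1) a) (deriv (f i2) b)) ^ (((n:ℝ)+2)/2)
          * (F (deriv (f i1) a') (deriv (f i2) b')) ^ (((n:ℝ)+2)/2))
        = K₀^2 * ((F (deriv (f i1) a) (deriv (f i2) b')) ^ (((n:ℝ)+2)/2)
          * (F (deriv (f i1) a') (deriv (f i2) b)) ^ (((n:ℝ)+2)/2)) := by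
      calc K₀^2 * (_ * _)
          = (K₀ * (F (deriv (f i1) a) (deriv (f i2) b)) ^ (((n:ℝ)+2)/2))
            * (K₀ * (F (deriv (f i1) a') (deriv (f i2) b')) ^ (((n:ℝ)+2)/2)) := by ring
        _ = ((A.det)^2 * (deriv (deriv (f i1)) a * (deriv (deriv (f i2)) b * RR)))
            * ((A.det)^2 * (deriv (deriv (f i1)) a' * (deriv (deriv (f i2)) b' * RR))) := by
            rw [keyF, keyF]
        _ = ((A.det)^2 * (deriv (deriv (f i1)) a * (deriv (deriv (f i2)) b' * RR)))
            * ((A.det)^2 * (deriv (deriv (f i1)) a' * (deriv (deriv (f i2)) b * RR))) := by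
            ring
        _ = (K₀ * (F (deriv (f i1) a) (deriv (f i2) b')) ^ (((n:ℝ)+2)/2))
            * (K₀ * (F (deriv (f i1) a') (deriv (f i2) b)) ^ (((n:ℝ)+2)/2)) := by
            rw [keyF, keyF]
        _ = K₀^2 * ((F (deriv (f i1) a) (deriv (f i2) b')) ^ (((n:ℝ)+2)/2)
            * (F (deriv (f i1) a') (deriv (f i2) b)) ^ (((n:ℝ)+2)/2)) := by ring
    exact mul_left_cancel₀ (pow_ne_zero 2 hK0) h2
  set s0 : ℝ := deriv (f i1) 0 with hs0
  set t0 : ℝ := deriv (f i2) 0 with ht0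
  -- extend in the first variable
  have stepA : ∀ b s : ℝ, F s (deriv (f i2) b) * F s0 t0 = F s t0 * F s0 (deriv (f i2) b) := by
    intro b
    have hq := quad_ext (hinf i1) (a := P * F s0 t0 - P * F s0 (deriv (f i2) b))
      (b := (2*M*(deriv (f i2) b) + 2*B1) * F s0 t0 - (2*M*t0 + 2*B1) * F s0 (deriv (f i2) b))
      (c := (1 + R2*(deriv (f i2) b)^2 + 2*B2*(deriv (f i2) b) + CC) * F s0 t0
        - (1 + R2*t0^2 + 2*B2*t0 + CC) * F s0 (deriv (f i2) b)) ?_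
    · intro s
      have := hq s
      simp only [hF] at this ⊢
      linear_combination this
    · rintro s ⟨a, rfl⟩
      have h := hrect a 0 b 0
      simp only [hF, ← hs0, ← ht0] at h ⊢
      linear_combination h
  -- extend in the second variable
  have stepB : ∀ s τ : ℝ, F s τ * F s0 t0 = F s t0 * F s0 τ := by
    intro s
    have hq := quad_ext (hinf i2) (a := R2 * F s0 t0 - F s t0 * R2)
      (b := (2*M*s + 2*B2) * F s0 t0 - F s t0 * (2*M*s0 + 2*B2))
      (c := (1 + P*s^2 + 2*B1*s + CC) * F s0 t0 - F s t0 * (1 + P*s0^2 + 2*B1*s0 + CC)) ?_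
    · intro τ
      have := hq τ
      simp only [hF] at this ⊢
      linear_combination this
    · rintro τ ⟨b, rfl⟩
      have h := stepA b s
      simp only [hF] at h ⊢
      linear_combination h
  -- endgame
  by_cases hP0 : P = 0
  · have hrow : ∀ j, A i1 j = 0 := by
      intro j
      have hsum : ∑ j, (A i1 j)^2 = 0 := by rw [← hP, hP0]
      have := (Finset.sum_eq_zero_iff_of_nonneg
        (fun j _ => sq_nonneg (A i1 j))).1 hsum j (Finset.mem_univ j)
      exact pow_eq_zero_iff two_ne_zero |>.1 this
    exact hA.ne_zero (Matrix.det_eq_zero_of_row_eq_zero i1 hrow)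
  · have hconst : ∀ τ : ℝ, F s0 t0 = F s0 τ := by
      intro τ
      have h1 := stepB 1 τ
      have h2 := stepB (-1) τ
      have h3 := stepB 0 τ
      have hP2 : P * F s0 t0 = P * F s0 τ := by
        simp only [hF] at h1 h2 h3 ⊢
        linear_combination (h1 + h2 - 2*h3)/2
      exact mul_left_cancel₀ hP0 hP2
    have hR20 : R2 = 0 := by
      have c1 := hconst 1
      have c2 := hconst (-1)
      have c3 := hconst 0
      simp only [hF] at c1 c2 c3
      linear_combination (-c1 - c2 + 2*c3)/2
    have hrow : ∀ j, A i2 j = 0 := by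
      intro j
      have hsum : ∑ j, (A i2 j)^2 = 0 := by rw [← hR2, hR20]
      have := (Finset.sum_eq_zero_iff_of_nonneg
        (fun j _ => sq_nonneg (A i2 j))).1 hsum j (Finset.mem_univ j)
      exact pow_eq_zero_iff two_ne_zero |>.1 this
    exact hA.ne_zero (Matrix.det_eq_zero_of_row_eq_zero i2 hrow)
end

section
/- Let f₁,…,fₙ : ℝ → ℝ be smooth, A = (a_{ij}) an invertible n×n real matrix, and z(x) = Σᵢ fᵢ((Ax)ᵢ). Suppose the relative (isotropic Gaussian) curvature K(x) = det(Hess(z)(x)) equals a nonzero constant K₀ for all x. Then each fᵢ is a quadratic polynomial: fᵢ(t) = cᵢ t² + dᵢ t + eᵢ with cᵢ ≠ 0 and c₁c₂⋯cₙ = K₀ / (2ⁿ (det A)²). -/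
noncomputable def Lmap {n : ℕ} (A : Matrix (Fin n) (Fin n) ℝ) (i : Fin n) :
    (Fin n → ℝ) →L[ℝ] ℝ :=
  ∑ j, A i j • (ContinuousLinearMap.proj j : ((Fin n → ℝ)) →L[ℝ] ℝ)

lemma Lmap_apply {n : ℕ} (A : Matrix (Fin n) (Fin n) ℝ) (i : Fin n) (v : Fin n → ℝ) :
    Lmap A i v = A.mulVec v i := by
  simp [Lmap, Matrix.mulVec, dotProduct]

lemma Lmap_single {n : ℕ} (A : Matrix (Fin n) (Fin n) ℝ) (i j : Fin n) :
    Lmap A i (Pi.single j 1) = A i j := by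
  rw [Lmap_apply]; simp [Matrix.mulVec_single]

lemma quad_of_const_second_deriv (f : ℝ → ℝ) (hf : ContDiff ℝ (⊤ : ℕ∞) f) (b : ℝ)
    (hb : ∀ t, deriv (deriv f) t = b) :
    ∀ t, f t = (b / 2) * t ^ 2 + deriv f 0 * t + f 0 := by
  have hTT : ContDiff ℝ ((⊤:ℕ∞):WithTop ℕ∞) f := hf.of_le (by simp)
  have hdf : Differentiable ℝ f := hTT.differentiable (by simp)
  have hdf' : Differentiable ℝ (deriv f) :=
    (contDiff_infty_iff_deriv.mp hTT).2.differentiable (by simp)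
  have h1 : ∀ t, deriv f t = b * t + deriv f 0 := by
    intro t
    have hd : Differentiable ℝ (fun t => deriv f t - b * t) :=
      hdf'.sub (differentiable_id.const_mul b)
    have hz : ∀ t, deriv (fun t => deriv f t - b * t) t = 0 := by
      intro t
      have h2 : HasDerivAt (fun t => deriv f t - b * t) (deriv (deriv f) t - b) t :=
        (((hdf' t).hasDerivAt).sub ((hasDerivAt_id t).const_mul b)).congr_deriv (by ring)
      rw [h2.deriv, hb t, sub_self]
    have := is_const_of_deriv_eq_zero hd hz t 0
    simp at this
    linarith
  intro t
  have hd : Differentiable ℝ (fun t => f t - ((b / 2) * t ^ 2 + deriv f 0 * t)) := by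
    apply hdf.sub
    exact ((differentiable_pow 2).const_mul _).add (differentiable_id.const_mul _)
  have hz : ∀ t, deriv (fun t => f t - ((b / 2) * t ^ 2 + deriv f 0 * t)) t = 0 := by
    intro t
    have hp : HasDerivAt (fun t : ℝ => (b / 2) * t ^ 2 + deriv f 0 * t)
        (b / 2 * (2 * t ^ 1) + deriv f 0 * 1) t :=
      (((hasDerivAt_pow 2 t).const_mul (b / 2)).add ((hasDerivAt_id t).const_mul (deriv f 0))).congr_deriv (by norm_num)
    have h2 : HasDerivAt (fun t => f t - ((b / 2) * t ^ 2 + deriv f 0 * t))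
        (deriv f t - (b / 2 * (2 * t ^ 1) + deriv f 0 * 1)) t :=
      (hdf t).hasDerivAt.sub hp
    rw [h2.deriv, h1 t]; ring
  have := is_const_of_deriv_eq_zero hd hz t 0
  simp at this
  linarith

theorem stmt_7 {n : ℕ} (f : Fin n → ℝ → ℝ) (hf : ∀ i, ContDiff ℝ (⊤ : ℕ∞) (f i))
    (A : Matrix (Fin n) (Fin n) ℝ) (hA : IsUnit A.det)
    (z : (Fin n → ℝ) → ℝ) (hz : ∀ x, z x = ∑ i, f i (A.mulVec x i))
    (K₀ : ℝ) (hK₀ : K₀ ≠ 0)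
    (hK : ∀ x : Fin n → ℝ, (hessian z x).det = K₀) :
    ∃ c d e : Fin n → ℝ,
      (∀ i, c i ≠ 0) ∧
      (∀ i, ∀ t : ℝ, f i t = c i * t ^ 2 + d i * t + e i) ∧
      (∏ i, c i) = K₀ / (2 ^ n * A.det ^ 2) := by
  classical
  set g : Fin n → ℝ → ℝ := fun i => deriv (deriv (f i)) with hgdef
  have hdet : A.det ≠ 0 := hA.ne_zero
  have hfd : ∀ i, Differentiable ℝ (f i) :=
    fun i => (hf i).differentiable (by simp)
  have hfd' : ∀ i, Differentiable ℝ (deriv (f i)) := by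
    intro i
    have hTT : ContDiff ℝ ((⊤:ℕ∞):WithTop ℕ∞) (f i) := (hf i).of_le (by simp)
    exact (contDiff_infty_iff_deriv.mp hTT).2.differentiable (by simp)
  have hzfun : z = fun x => ∑ i, f i (A.mulVec x i) := funext hz
  have hL : ∀ (i : Fin n) (x : Fin n → ℝ),
      HasFDerivAt (fun x => A.mulVec x i) (Lmap A i) x := by
    intro i x
    have : (fun x : Fin n → ℝ => A.mulVec x i) = fun x => Lmap A i x :=
      funext fun v => (Lmap_apply A i v).symm
    rw [this]
    exact (Lmap A i).hasFDerivAt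
  -- first derivative of z
  have step1 : ∀ x, HasFDerivAt z (∑ i, deriv (f i) (A.mulVec x i) • Lmap A i) x := by
    intro x
    rw [hzfun]
    apply HasFDerivAt.fun_sum
    intro i _
    exact ((hfd i (A.mulVec x i)).hasDerivAt).comp_hasFDerivAt x (hL i x)
  have w1 : ∀ (j : Fin n) (x : Fin n → ℝ),
      fderiv ℝ z x (Pi.single j 1) = ∑ i, deriv (f i) (A.mulVec x i) * A i j := by
    intro j x
    rw [(step1 x).fderiv]
    simp [Lmap_single]
  -- second derivative
  have step2 : ∀ (j : Fin n) (x : Fin n → ℝ),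
      HasFDerivAt (fun y => fderiv ℝ z y (Pi.single j 1))
        (∑ i, (A i j * g i (A.mulVec x i)) • Lmap A i) x := by
    intro j x
    have heq : (fun y => fderiv ℝ z y (Pi.single j 1))
        = fun y => ∑ i, deriv (f i) (A.mulVec y i) * A i j := funext fun y => w1 j y
    rw [heq]
    apply HasFDerivAt.fun_sum
    intro i _
    have h1 : HasFDerivAt (fun y => deriv (f i) (A.mulVec y i))
        (g i (A.mulVec x i) • Lmap A i) x :=
      by have h := ((hfd' i (A.mulVec x i)).hasDerivAt).comp_hasFDerivAt x (hL i x); exact h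
    have h2 := h1.mul_const (A i j)
    convert h2 using 1
    ext v
    simp
    ring
    ext v
    simp only [ContinuousLinearMap.smul_apply, smul_eq_mul]
    ring
  have hess_eq : ∀ x : Fin n → ℝ,
      hessian z x = A.transpose * Matrix.diagonal (fun i => g i (A.mulVec x i)) * A := by
    intro x
    ext i' j
    have : hessian z x i' j
        = (∑ i, (A i j * g i (A.mulVec x i)) • Lmap A i) (Pi.single i' 1) := by
      rw [hessian, (step2 j x).fderiv]
    rw [this]
    simp [Matrix.mul_apply, Matrix.diagonal_apply, Matrix.transpose_apply, Lmap_single,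
      Finset.sum_ite_eq, mul_comm, mul_assoc, mul_left_comm]
  -- determinant identity
  have hdetx : ∀ x : Fin n → ℝ,
      A.det ^ 2 * ∏ i, g i (A.mulVec x i) = K₀ := by
    intro x
    have := hK x
    rw [hess_eq x] at this
    rw [← this]
    rw [Matrix.det_mul, Matrix.det_mul, Matrix.det_transpose, Matrix.det_diagonal]
    ring
  -- surjectivity of mulVec
  have hsurj : ∀ y : Fin n → ℝ, ∃ x, A.mulVec x = y := by
    intro y
    refine ⟨A⁻¹.mulVec y, ?_⟩
    rw [Matrix.mulVec_mulVec, Matrix.mul_nonsing_inv A hA, Matrix.one_mulVec]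
  have hprod : ∀ y : Fin n → ℝ, ∏ i, g i (y i) = K₀ / A.det ^ 2 := by
    intro y
    obtain ⟨x, hx⟩ := hsurj y
    have := hdetx x
    rw [hx] at this
    field_simp
    linarith [this]
  have hC0 : K₀ / A.det ^ 2 ≠ 0 := by
    apply div_ne_zero hK₀ (pow_ne_zero _ hdet)
  have hprod0 : ∏ i, g i 0 = K₀ / A.det ^ 2 := by
    have := hprod 0
    simpa using this
  have hgi0 : ∀ i, g i 0 ≠ 0 := by
    intro i
    have := hprod0 ▸ hC0
    exact fun h => this (Finset.prod_eq_zero (Finset.mem_univ i) h)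
  -- each g i is constant
  have hgconst : ∀ i t, g i t = g i 0 := by
    intro i t
    have h1 := hprod (Function.update (0 : Fin n → ℝ) i t)
    rw [← hprod0] at h1
    have e1 : ∏ k, g k (Function.update (0 : Fin n → ℝ) i t k)
        = g i t * ∏ k ∈ Finset.univ.erase i, g k 0 := by
      rw [← Finset.mul_prod_erase Finset.univ _ (Finset.mem_univ i)]
      congr 1
      · simp
      · apply Finset.prod_congr rfl
        intro k hk
        have : k ≠ i := (Finset.mem_erase.mp hk).1
        simp [Function.update_of_ne this]
    have e2 : ∏ k, g k (0 : ℝ) = g i 0 * ∏ k ∈ Finset.univ.erase i, g k 0 :=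
      (Finset.mul_prod_erase Finset.univ _ (Finset.mem_univ i)).symm
    have hP : ∏ k ∈ Finset.univ.erase i, g k 0 ≠ 0 :=
      Finset.prod_ne_zero_iff.mpr fun k _ => hgi0 k
    rw [e1, e2] at h1
    exact mul_right_cancel₀ hP h1
  -- conclude
  refine ⟨fun i => g i 0 / 2, fun i => deriv (f i) 0, fun i => f i 0, ?_, ?_, ?_⟩
  · intro i
    exact div_ne_zero (hgi0 i) two_ne_zero
  · intro i t
    exact quad_of_const_second_deriv (f i) (hf i) (g i 0) (fun t => hgconst i t) t
  · rw [Finset.prod_div_distrib, hprod0, Finset.prod_const, Finset.card_univ,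
      Fintype.card_fin, div_div, mul_comm]
end
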